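/- arXiv:2409.19344 — 2 statements merged into one kernel-verified Lean document; each statement's English description precedes it below -/
import Mathlib

section
/- Let r ≥ 3, t ≥ 1, and let n, k satisfy n ≥ 2k − t. Then every r-wise t-intersecting family 𝓕 of k-element subsets of [n] satisfies |𝓕| ≤ Σ_{i=0}^{t} C(t,i)·C(n−t, k−t−(r−1)i), where C(n−t, m) is interpreted as 0 when m < 0. -/
/-- A family `𝓕` is `r`-wise `t`-intersecting if any `r` (not necessarily distinct)
members have at least `t` common elements. -/
def RwiseIntersecting (r t : ℕ) (𝓕 : Finset (Finset ℕ)) : Prop :=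
  ∀ G : Fin r → Finset ℕ, (∀ i, G i ∈ 𝓕) → t ≤ (⋂ i, ((G i : Finset ℕ) : Set ℕ)).ncard

/-!
Compressing `j` into `i < j` preserves size, uniformity and the `r`-wise `t`-intersecting
property and lowers the total sum of the elements, so the family may be assumed shifted.
In a shifted `r`-wise `t`-intersecting family every member `F` satisfies
`|F ∩ [t + r d]| ≥ t + (r - 1) d` for some `d` (Frankl's random walk): otherwise, for each
residue `m` modulo `r - 1`, replace the elements of `F` of rank `t - 1 + (r - 1) q + m` by the
`(q + 1)`-st positive integer missing from `F`, which is smaller; by shiftedness these `r - 1` sets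
lie in the family, and together with `F` they meet only in the `t - 1` smallest elements of `F`.
The `k`-subsets of `[n]` with this property are counted by splitting off their trace on `[t]`
and then, one block of `r` elements at a time, by induction; since `2 k ≤ n + t` every
binomial coefficient that occurs lies below the middle, and Vandermonde's identity closes each
step.
-/

open Finset UV
open scoped FinsetFamily

def Shifted (𝓕 : Finset (Finset ℕ)) : Prop :=
  ∀ ⦃i j : ℕ⦄, 1 ≤ i → i < j → ∀ ⦃A⦄, A ∈ 𝓕 → j ∈ A → i ∉ A → insert i (A.erase j) ∈ 𝓕

namespace UV

variable {i j z : ℕ} {A : Finset ℕ} {𝓕 : Finset (Finset ℕ)}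

lemma compress_singleton_of_mem_of_notMem (hj : j ∈ A) (hi : i ∉ A) :
    compress {i} {j} A = insert i (A.erase j) := by
  rw [compress_of_disjoint_of_le (disjoint_singleton_left.2 hi) (singleton_subset_iff.2 hj)]
  ext x
  simp only [sup_eq_union, mem_sdiff, mem_union, mem_singleton, mem_insert, mem_erase]
  grind

lemma compress_singleton_eq_self (h : ¬(j ∈ A ∧ i ∉ A)) : compress {i} {j} A = A := by
  rw [compress, if_neg]
  simpa [disjoint_singleton_left, and_comm] using h

lemma mem_compress_singleton_iff (hi : z ≠ i) (hj : z ≠ j) :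
    z ∈ compress {i} {j} A ↔ z ∈ A := by
  by_cases h : j ∈ A ∧ i ∉ A
  · simp [compress_singleton_of_mem_of_notMem h.1 h.2, hi, hj]
  · rw [compress_singleton_eq_self h]

lemma mem_of_mem_compress_singleton (hij : i ≠ j) (h : j ∈ compress {i} {j} A) : i ∈ A := by
  by_contra hi
  by_cases hj : j ∈ A
  · simp [compress_singleton_of_mem_of_notMem hj hi, Ne.symm hij] at h
  · exact hj (by rwa [compress_singleton_eq_self (by tauto)] at h)

lemma mem_compress_singleton_of_mem (hj : j ∈ A) : i ∈ compress {i} {j} A := by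
  by_cases hi : i ∈ A
  · rwa [compress_singleton_eq_self (by tauto)]
  · simp [compress_singleton_of_mem_of_notMem hj hi]

lemma sum_compress_singleton_lt (hij : i < j) (hj : j ∈ A) (hi : i ∉ A) :
    ∑ x ∈ compress {i} {j} A, x < ∑ x ∈ A, x := by
  rw [compress_singleton_of_mem_of_notMem hj hi, sum_insert (by simp [hi]),
    ← add_sum_erase A (fun x ↦ x) hj]
  omega

lemma sum_compress_singleton_le (hij : i < j) (A : Finset ℕ) :
    ∑ x ∈ compress {i} {j} A, x ≤ ∑ x ∈ A, x := by
  by_cases h : j ∈ A ∧ i ∉ A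
  · exact (sum_compress_singleton_lt hij h.1 h.2).le
  · rw [compress_singleton_eq_self h]

lemma compression_subset_powersetCard {k n : ℕ} (hi : 1 ≤ i) (hij : i < j)
    (h : 𝓕 ⊆ powersetCard k (Icc 1 n)) : 𝓒 {i} {j} 𝓕 ⊆ powersetCard k (Icc 1 n) := by
  intro B hB
  obtain ⟨hB, -⟩ | ⟨-, A, hA, rfl⟩ := mem_compression.1 hB
  · exact h hB
  obtain ⟨hAn, hAk⟩ := mem_powersetCard.1 (h hA)
  refine mem_powersetCard.2 ⟨?_, by rw [card_compress (by simp), hAk]⟩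
  by_cases hc : j ∈ A ∧ i ∉ A
  · have := mem_Icc.1 (hAn hc.1)
    rw [compress_singleton_of_mem_of_notMem hc.1 hc.2]
    exact insert_subset (mem_Icc.2 ⟨hi, by omega⟩) ((erase_subset _ _).trans hAn)
  · rwa [compress_singleton_eq_self hc]

end UV

section Compression

variable {i j : ℕ} {A : Finset ℕ} {𝓕 : Finset (Finset ℕ)}

def elementSum (𝓕 : Finset (Finset ℕ)) : ℕ := ∑ A ∈ 𝓕, ∑ x ∈ A, x

lemma elementSum_compression_lt (hij : i < j) (hA : A ∈ 𝓕) (hj : j ∈ A) (hi : i ∉ A)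
    (hA' : insert i (A.erase j) ∉ 𝓕) : elementSum (𝓒 {i} {j} 𝓕) < elementSum 𝓕 := by
  have hinj : Set.InjOn (compress {i} {j})
      (({a ∈ 𝓕 | compress {i} {j} a ∉ 𝓕} : Finset (Finset ℕ)) : Set (Finset ℕ)) :=
    compress_injOn
  unfold elementSum compression
  rw [sum_union compress_disjoint, filter_image, sum_image hinj,
    ← sum_filter_add_sum_filter_not 𝓕 (compress {i} {j} · ∈ 𝓕)]
  refine Nat.add_lt_add_left ?_ _
  refine sum_lt_sum (fun B _ ↦ sum_compress_singleton_le hij B) ⟨A, mem_filter.2 ⟨hA, ?_⟩, ?_⟩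
  · rwa [compress_singleton_of_mem_of_notMem hj hi]
  · exact sum_compress_singleton_lt hij hj hi

/- Each `G a` of the compressed family comes from some `H a ∈ 𝓕` that agrees with it off
`{i, j}`, and the transposition `(i j)` maps `⋂ a, H a` into `⋂ a, G a`. -/
lemma RwiseIntersecting.compression {r t : ℕ} (hij : i ≠ j) (h : RwiseIntersecting r t 𝓕) :
    RwiseIntersecting r t (𝓒 {i} {j} 𝓕) := by
  intro G hG
  by_cases hall : ∀ a, G a ∈ 𝓕
  · exact h G hall
  obtain ⟨b, hb⟩ := not_forall.1 hall
  have hpre : ∀ a, ∃ H ∈ 𝓕, (G a ∈ 𝓕 → H = compress {i} {j} (G a)) ∧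
      (G a ∉ 𝓕 → compress {i} {j} H = G a ∧ i ∉ H) := by
    intro a
    by_cases ha : G a ∈ 𝓕
    · refine ⟨_, ((mem_compression.1 (hG a)).resolve_right fun h ↦ h.1 ha).2, fun _ ↦ rfl,
        fun h ↦ absurd ha h⟩
    · obtain ⟨H, hH, hHG⟩ := ((mem_compression.1 (hG a)).resolve_left fun h ↦ ha h.1).2
      refine ⟨H, hH, fun h ↦ absurd h ha, fun _ ↦ ⟨hHG, fun hi ↦ ha ?_⟩⟩
      rwa [← hHG, compress_singleton_eq_self (by tauto)]
  choose H hH𝓕 hHcomp hHpre using hpre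
  refine (h H hH𝓕).trans (Set.ncard_le_ncard_of_injOn (Equiv.swap i j) ?_
    (Equiv.swap i j).injective.injOn ((G b).finite_toSet.subset (Set.iInter_subset _ b)))
  intro z hz
  simp only [Set.mem_iInter, mem_coe] at hz ⊢
  have hzi : z ≠ i := fun h ↦ (hHpre b hb).2 (h ▸ hz b)
  intro a
  by_cases hzj : z = j
  · subst hzj
    rw [Equiv.swap_apply_right]
    by_cases ha : G a ∈ 𝓕
    · exact mem_of_mem_compress_singleton hij (hHcomp a ha ▸ hz a)
    · exact (hHpre a ha).1 ▸ mem_compress_singleton_of_mem (hz a)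
  · rw [Equiv.swap_apply_of_ne_of_ne hzi hzj]
    by_cases ha : G a ∈ 𝓕
    · exact (mem_compress_singleton_iff hzi hzj).1 (hHcomp a ha ▸ hz a)
    · exact (hHpre a ha).1 ▸ (mem_compress_singleton_iff hzi hzj).2 (hz a)

lemma exists_shifted (P : Finset (Finset ℕ) → Prop)
    (hP : ∀ ⦃i j 𝓖⦄, 1 ≤ i → i < j → P 𝓖 → P (𝓒 {i} {j} 𝓖)) (h : P 𝓕) :
    ∃ 𝓖, P 𝓖 ∧ Shifted 𝓖 := by
  induction hw : elementSum 𝓕 using Nat.strong_induction_on generalizing 𝓕 with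
  | _ w ih =>
  by_cases hsh : Shifted 𝓕
  · exact ⟨𝓕, h, hsh⟩
  simp only [Shifted, not_forall] at hsh
  obtain ⟨i, j, hi, hij, A, hA, hj, hiA, hA'⟩ := hsh
  exact ih _ (hw ▸ elementSum_compression_lt hij hA hj hiA hA') (hP hi hij h) rfl

end Compression

lemma Shifted.sdiff_union_image_mem {𝓕 : Finset (Finset ℕ)} (hsh : Shifted 𝓕) {f : ℕ → ℕ}
    {A F : Finset ℕ} (hF : F ∈ 𝓕) (hA : A ⊆ F) (hf : Set.InjOn f A) (hfF : ∀ z ∈ A, f z ∉ F)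
    (hflt : ∀ z ∈ A, 1 ≤ f z ∧ f z < z) : F \ A ∪ A.image f ∈ 𝓕 := by
  induction A using Finset.induction_on generalizing F with
  | empty => simpa using hF
  | insert a A ha ih =>
    have haA := mem_insert_self a A
    have hfa := hflt a haA
    have hfaA : f a ∉ A := fun h ↦ hfF a haA (hA (mem_insert_of_mem h))
    have key := ih (hsh hfa.1 hfa.2 hF (hA haA) (hfF a haA))
      (fun z hz ↦ mem_insert_of_mem
        (mem_erase.2 ⟨ne_of_mem_of_not_mem hz ha, hA (mem_insert_of_mem hz)⟩))
      (hf.mono (by simp))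
      (fun z hz ↦ by
        have hza : z ≠ a := ne_of_mem_of_not_mem hz ha
        have := hf.ne (mem_insert_of_mem hz) haA hza
        simp [this, hfF z (mem_insert_of_mem hz)])
      (fun z hz ↦ hflt z (mem_insert_of_mem hz))
    convert key using 1
    ext z
    simp only [mem_union, mem_sdiff, mem_insert, mem_erase, image_insert]
    by_cases hz : z = f a
    · subst hz
      simp [hfaA]
    · tauto

section Walk

variable {F : Finset ℕ} {M q z : ℕ}

lemma count_mem_add_one_eq_card (h0 : 0 ∉ F) (M : ℕ) :
    Nat.count (· ∈ F) (M + 1) = #(F ∩ Icc 1 M) := by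
  rw [Nat.count_eq_card_filter_range]
  congr 1
  ext x
  simp only [mem_filter, mem_range, mem_inter, mem_Icc]
  rcases Nat.eq_zero_or_pos x with rfl | hx
  · simp [h0]
  · have : x < M + 1 ↔ 1 ≤ x ∧ x ≤ M := by omega
    tauto

lemma lt_of_card_inter_Icc_le_count (h0 : 0 ∉ F) (hz : z ∈ F)
    (h : #(F ∩ Icc 1 M) ≤ Nat.count (· ∈ F) z) : M < z := by
  by_contra! hzM
  have := Nat.count_monotone (· ∈ F) (Nat.succ_le_succ hzM)
  rw [Nat.count_succ, if_pos hz, count_mem_add_one_eq_card h0] at this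
  omega

lemma card_filter_count_lt_le (F : Finset ℕ) (s : ℕ) : #{z ∈ F | Nat.count (· ∈ F) z < s} ≤ s := by
  simpa using card_le_card_of_injOn (Nat.count (· ∈ F)) (t := range s)
    (fun z hz ↦ by simpa using (mem_filter.1 hz).2)
    fun z hz w hw ↦ Nat.count_injective (p := (· ∈ F)) (mem_filter.1 hz).1 (mem_filter.1 hw).1

/-- `nthPosNotMem F q` is the `(q + 1)`-st positive integer outside `F`. -/
noncomputable def nthPosNotMem (F : Finset ℕ) : ℕ → ℕ := Nat.nth fun z ↦ 0 < z ∧ z ∉ F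

lemma infinite_setOf_pos_notMem (F : Finset ℕ) : {z | 0 < z ∧ z ∉ F}.Infinite :=
  (F.finite_toSet.insert 0).infinite_compl.mono fun z hz ↦ by
    simp only [Set.mem_compl_iff, Set.mem_insert_iff, mem_coe, not_or] at hz
    exact ⟨Nat.pos_of_ne_zero hz.1, hz.2⟩

lemma nthPosNotMem_pos : 0 < nthPosNotMem F q :=
  (Nat.nth_mem_of_infinite (infinite_setOf_pos_notMem F) q).1

lemma nthPosNotMem_notMem : nthPosNotMem F q ∉ F :=
  (Nat.nth_mem_of_infinite (infinite_setOf_pos_notMem F) q).2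

lemma nthPosNotMem_injective : Function.Injective (nthPosNotMem F) :=
  Nat.nth_injective (infinite_setOf_pos_notMem F)

lemma nthPosNotMem_le (h : #(F ∩ Icc 1 M) + q < M) : nthPosNotMem F q ≤ M := by
  refine Nat.lt_succ_iff.1 (Nat.nth_lt_of_lt_count ?_)
  have hgaps : {x ∈ range (M + 1) | 0 < x ∧ x ∉ F} = Icc 1 M \ F := by
    ext x
    simp only [mem_filter, mem_range, mem_sdiff, mem_Icc]
    have : x < M + 1 ∧ 0 < x ↔ 1 ≤ x ∧ x ≤ M := by omega
    tauto
  rw [Nat.count_eq_card_filter_range, hgaps, card_sdiff, Nat.card_Icc]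
  omega

lemma nthPosNotMem_lt {r t : ℕ} (hr : 1 ≤ r) (h0 : 0 ∉ F) (hz : z ∈ F)
    (hF : #(F ∩ Icc 1 (t + r * q)) < t + (r - 1) * q)
    (hzq : t - 1 + (r - 1) * q ≤ Nat.count (· ∈ F) z) : nthPosNotMem F q < z := by
  have hrq : r * q = (r - 1) * q + q := by
    rw [← Nat.succ_mul, Nat.succ_eq_add_one, Nat.sub_add_cancel hr]
  exact (nthPosNotMem_le (M := t + r * q) (by omega)).trans_lt
    (lt_of_card_inter_Icc_le_count h0 hz (by omega))

theorem Shifted.exists_le_card_inter_Icc {𝓕 : Finset (Finset ℕ)} {r t : ℕ} (hr : 2 ≤ r)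
    (hsh : Shifted 𝓕) (hint : RwiseIntersecting r t 𝓕) (hF : F ∈ 𝓕) (h0 : 0 ∉ F) :
    ∃ d, t + (r - 1) * d ≤ #(F ∩ Icc 1 (t + r * d)) := by
  by_contra! hviol
  have ht : 1 ≤ t := by
    have := hviol 0
    omega
  set ρ := Nat.count (· ∈ F)
  set q : ℕ → ℕ := fun z ↦ (ρ z - (t - 1)) / (r - 1)
  set A : ℕ → Finset ℕ := fun m ↦ {z ∈ F | t - 1 ≤ ρ z ∧ (ρ z - (t - 1)) % (r - 1) = m}
  set G : ℕ → Finset ℕ := fun m ↦ F \ A m ∪ (A m).image (nthPosNotMem F ∘ q)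
  have hinj : ∀ m, Set.InjOn (nthPosNotMem F ∘ q) (A m) := by
    intro m z hz w hw hzw
    obtain ⟨hzF, hzt, hzm⟩ := mem_filter.1 hz
    obtain ⟨hwF, hwt, hwm⟩ := mem_filter.1 hw
    have hq : q z = q w := nthPosNotMem_injective hzw
    have hz' := Nat.div_add_mod (ρ z - (t - 1)) (r - 1)
    have hw' := Nat.div_add_mod (ρ w - (t - 1)) (r - 1)
    simp only [q] at hq
    rw [hq, hzm, ← hwm] at hz'
    exact Nat.count_injective (p := (· ∈ F)) hzF hwF (show ρ z = ρ w by omega)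
  have hG : ∀ m, G m ∈ 𝓕 := fun m ↦ hsh.sdiff_union_image_mem hF (filter_subset _ _) (hinj m)
    (fun _ _ ↦ nthPosNotMem_notMem) fun z hz ↦ ⟨nthPosNotMem_pos, by
      obtain ⟨hzF, hzt, -⟩ := mem_filter.1 hz
      have : (r - 1) * q z ≤ ρ z - (t - 1) := Nat.mul_div_le _ _
      exact nthPosNotMem_lt (by omega) h0 hzF (hviol (q z))
        (show t - 1 + (r - 1) * q z ≤ ρ z by omega)⟩
  have hsub : ⋂ m : Fin r, (G m : Set ℕ) ⊆ ↑{z ∈ F | ρ z < t - 1} := by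
    intro z hz
    simp only [Set.mem_iInter, mem_coe] at hz
    -- no residue modulo `r - 1` equals `r - 1`, so `G (r - 1) = F`
    have hzF : z ∈ F := by
      simpa [G, A, (Nat.mod_lt _ (by omega : 0 < r - 1)).ne] using hz ⟨r - 1, by omega⟩
    refine mem_filter.2 ⟨hzF, not_le.1 fun hzt ↦ ?_⟩
    set m := (ρ z - (t - 1)) % (r - 1)
    have hzA : z ∈ A m := mem_filter.2 ⟨hzF, hzt, rfl⟩
    have := hz ⟨m, (Nat.mod_lt _ (by omega)).trans (by omega)⟩
    simp only [G, mem_union, mem_sdiff, hzA, not_true, and_false, false_or, mem_image] at this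
    obtain ⟨w, -, rfl⟩ := this
    exact nthPosNotMem_notMem hzF
  have := (hint (fun m ↦ G m) fun m ↦ hG m).trans (Set.ncard_le_ncard hsub (finite_toSet _))
  rw [Set.ncard_coe_finset] at this
  have : #{z ∈ F | ρ z < t - 1} ≤ t - 1 := card_filter_count_lt_le F (t - 1)
  omega

end Walk

section Binomial

lemma Nat.choose_le_choose_of_le_of_two_mul_le {n a c : ℕ} (hac : a ≤ c) (hc : 2 * c ≤ n) :
    n.choose a ≤ n.choose c := by
  induction c, hac using Nat.le_induction with
  | base => exact le_rfl
  | succ c _ ih => exact (ih (by omega)).trans (Nat.choose_le_succ_of_lt_half_left (by omega))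

lemma sum_range_choose_mul_reflect (p : ℕ) (g : ℕ → ℕ) :
    ∑ σ ∈ range (p + 1), p.choose σ * g (p - σ) = ∑ i ∈ range (p + 1), p.choose i * g i := by
  rw [← sum_range_reflect]
  refine sum_congr rfl fun i hi ↦ ?_
  have hi : i ≤ p := Nat.lt_succ_iff.1 (mem_range.1 hi)
  rw [Nat.add_sub_cancel, Nat.choose_symm hi, Nat.sub_sub_self hi]

lemma sum_range_choose_mul_ite_choose (r s c : ℕ) :
    ∑ u ∈ range (r + 1), r.choose u * (if u ≤ c then s.choose (c - u) else 0) =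
      (r + s).choose c := by
  rw [Nat.add_choose_eq, Finset.Nat.sum_antidiagonal_eq_sum_range_succ_mk]
  calc _ = ∑ u ∈ range (r + c + 1), r.choose u * (if u ≤ c then s.choose (c - u) else 0) :=
        sum_subset (range_subset_range.2 (by omega)) fun u _ hu ↦ by
          rw [Nat.choose_eq_zero_of_lt (by simpa using hu), zero_mul]
    _ = ∑ u ∈ range (c + 1), r.choose u * (if u ≤ c then s.choose (c - u) else 0) :=
        (sum_subset (range_subset_range.2 (by omega)) fun u _ hu ↦ by
          rw [if_neg (by simpa using hu), mul_zero]).symm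
    _ = _ := sum_congr rfl fun u hu ↦ by rw [if_pos (Nat.lt_succ_iff.1 (mem_range.1 hu))]

end Binomial

section Counting

variable {p m M b : ℕ} {B B' : Finset ℕ}

def shiftDown (p : ℕ) (B : Finset ℕ) : Finset ℕ :=
  {x ∈ B | p < x}.image (· - p)

lemma mem_shiftDown {x : ℕ} : x ∈ shiftDown p B ↔ 0 < x ∧ x + p ∈ B := by
  simp only [shiftDown, mem_image, mem_filter]
  constructor
  · rintro ⟨y, ⟨hy, hpy⟩, rfl⟩
    exact ⟨by omega, by rwa [Nat.sub_add_cancel hpy.le]⟩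
  · exact fun ⟨hx, hxB⟩ ↦ ⟨x + p, ⟨hxB, by omega⟩, by omega⟩

lemma shiftDown_subset_Icc (h : B ⊆ Icc 1 m) : shiftDown p B ⊆ Icc 1 (m - p) := fun x hx ↦ by
  rw [mem_shiftDown] at hx
  have := mem_Icc.1 (h hx.2)
  exact mem_Icc.2 ⟨hx.1, by omega⟩

lemma card_inter_Icc_add :
    #(B ∩ Icc 1 (p + M)) = #(B ∩ Icc 1 p) + #(shiftDown p B ∩ Icc 1 M) := by
  have hsplit : B ∩ Icc 1 (p + M) =
      B ∩ Icc 1 p ∪ (shiftDown p B ∩ Icc 1 M).map (addRightEmbedding p) := by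
    ext z
    simp only [mem_inter, mem_Icc, mem_union, mem_map, mem_shiftDown, addRightEmbedding_apply]
    constructor
    · rintro ⟨hz, hz1, hz2⟩
      rcases le_or_gt z p with hzp | hzp
      · exact Or.inl ⟨hz, hz1, hzp⟩
      · exact Or.inr ⟨z - p, ⟨⟨by omega, by rwa [Nat.sub_add_cancel hzp.le]⟩, by omega, by omega⟩,
          Nat.sub_add_cancel hzp.le⟩
    · rintro (⟨hz, hz1, hz2⟩ | ⟨x, ⟨⟨hx0, hx⟩, hx1, hx2⟩, rfl⟩)
      · exact ⟨hz, hz1, by omega⟩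
      · exact ⟨hx, by omega, by omega⟩
  rw [hsplit, card_union_of_disjoint, card_map]
  refine disjoint_left.2 fun z hz hz' ↦ ?_
  obtain ⟨x, hx, rfl⟩ := mem_map.1 hz'
  have := (mem_Icc.1 (mem_inter.1 hz).2).2
  have := (mem_shiftDown.1 (mem_inter.1 hx).1).1
  simp only [addRightEmbedding_apply] at *
  omega

lemma card_shiftDown (h : B ⊆ Icc 1 m) : #(shiftDown p B) = #B - #(B ∩ Icc 1 p) := by
  have := card_inter_Icc_add (B := B) (p := p) (M := m)
  rw [inter_eq_left.2 (h.trans (Icc_subset_Icc_right (by omega))),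
    inter_eq_left.2 ((shiftDown_subset_Icc h).trans (Icc_subset_Icc_right (by omega)))] at this
  omega

lemma eq_of_inter_Icc_eq_of_shiftDown_eq (h0 : 0 ∉ B) (h0' : 0 ∉ B')
    (h₁ : B ∩ Icc 1 p = B' ∩ Icc 1 p) (h₂ : shiftDown p B = shiftDown p B') : B = B' := by
  ext z
  rcases le_or_gt z p with hzp | hzp
  · rcases Nat.eq_zero_or_pos z with rfl | hz
    · simp [h0, h0']
    · simpa [hz, hzp, Nat.one_le_iff_ne_zero.2 hz.ne'] using Finset.ext_iff.1 h₁ z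
  · simpa [mem_shiftDown, Nat.sub_add_cancel hzp.le, hzp] using Finset.ext_iff.1 h₂ (z - p)

/- In Frankl's picture `B ⊆ [m]` is the lattice walk whose `x`-th step goes up if `x ∈ B` and
right otherwise; for `p = e = t` the condition says that it reaches the line
`y = (r - 1) x + t`. -/
open Classical in
noncomputable def walkFamily (r p e m b : ℕ) : Finset (Finset ℕ) :=
  {B ∈ powersetCard b (Icc 1 m) | ∃ j, e + (r - 1) * j ≤ #(B ∩ Icc 1 (p + r * j))}

variable {r e d : ℕ}

lemma mem_walkFamily : B ∈ walkFamily r p e m b ↔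
    B ∈ powersetCard b (Icc 1 m) ∧ ∃ j, e + (r - 1) * j ≤ #(B ∩ Icc 1 (p + r * j)) := by
  simp only [walkFamily, mem_filter]

lemma walkFamily_eq_empty_of_lt (h : b < e) : walkFamily r p e m b = ∅ :=
  eq_empty_of_forall_notMem fun B hB ↦ by
    obtain ⟨hBpc, j, hj⟩ := mem_walkFamily.1 hB
    have := (mem_powersetCard.1 hBpc).2 ▸
      card_le_card (inter_subset_left (s₂ := Icc 1 (p + r * j)))
    omega

lemma le_card_of_mem_walkFamily_zero (hr : 1 ≤ r) (hB : B ∈ walkFamily r 0 d m b) :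
    r * d ≤ b := by
  obtain ⟨hBpc, j, hj⟩ := mem_walkFamily.1 hB
  have hb : #(B ∩ Icc 1 (0 + r * j)) ≤ b :=
    (mem_powersetCard.1 hBpc).2 ▸ card_le_card inter_subset_left
  have hrj : #(B ∩ Icc 1 (0 + r * j)) ≤ r * j := by
    simpa using card_le_card (inter_subset_right (s₁ := B) (s₂ := Icc 1 (0 + r * j)))
  have hr' : ∀ x, r * x = (r - 1) * x + x := fun x ↦ by
    rw [← Nat.succ_mul, Nat.succ_eq_add_one, Nat.sub_add_cancel hr]
  have := hr' j
  have := hr' d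
  have : (r - 1) * d ≤ (r - 1) * j := Nat.mul_le_mul_left _ (by omega)
  omega

lemma walkFamily_zero_add_one (hr : 1 ≤ r) :
    walkFamily r 0 (d + 1) m b = walkFamily r r (d + r) m b := by
  ext B
  simp only [mem_walkFamily, zero_add]
  refine and_congr_right fun _ ↦ ⟨fun ⟨j, hj⟩ ↦ ?_, fun ⟨j, hj⟩ ↦ ⟨j + 1, ?_⟩⟩
  · obtain ⟨j, rfl⟩ : ∃ j', j = j' + 1 := Nat.exists_eq_add_one.2 (Nat.pos_of_ne_zero (by
      rintro rfl
      simp at hj))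
    refine ⟨j, ?_⟩
    rw [show r * (j + 1) = r + r * j by ring,
      show (r - 1) * (j + 1) = (r - 1) * j + (r - 1) by ring] at hj
    omega
  · rw [show r * (j + 1) = r + r * j by ring,
      show (r - 1) * (j + 1) = (r - 1) * j + (r - 1) by ring]
    omega

lemma card_walkFamily_fiber_le (S : Finset ℕ) :
    #{B ∈ walkFamily r p e m b | B ∩ Icc 1 p = S} ≤
      #(walkFamily r 0 (e - #S) (m - p) (b - #S)) := by
  have h0 : ∀ B ∈ powersetCard b (Icc 1 m), 0 ∉ B := fun B hB h0 ↦ by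
    simpa using (mem_powersetCard.1 hB).1 h0
  refine card_le_card_of_injOn (shiftDown p) (fun B hB ↦ ?_) fun B hB B' hB' h ↦ ?_
  · obtain ⟨hBW, rfl⟩ := mem_filter.1 hB
    obtain ⟨hBpc, j, hj⟩ := mem_walkFamily.1 hBW
    obtain ⟨hBm, rfl⟩ := mem_powersetCard.1 hBpc
    refine mem_walkFamily.2
      ⟨mem_powersetCard.2 ⟨shiftDown_subset_Icc hBm, card_shiftDown hBm⟩, ?_⟩
    rcases le_or_gt e #(B ∩ Icc 1 p) with he | he
    · exact ⟨0, by simp [Nat.sub_eq_zero_of_le he]⟩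
    · have := card_inter_Icc_add (B := B) (p := p) (M := r * j)
      exact ⟨j, by rw [zero_add]; omega⟩
  · obtain ⟨hBW, hBS⟩ := mem_filter.1 hB
    obtain ⟨hBW', hBS'⟩ := mem_filter.1 hB'
    exact eq_of_inter_Icc_eq_of_shiftDown_eq (h0 B (mem_walkFamily.1 hBW).1)
      (h0 B' (mem_walkFamily.1 hBW').1) (hBS.trans hBS'.symm) h

lemma card_walkFamily_le_sum (r p e m b : ℕ) : #(walkFamily r p e m b) ≤
    ∑ σ ∈ range (p + 1), p.choose σ * #(walkFamily r 0 (e - σ) (m - p) (b - σ)) := by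
  rw [card_eq_sum_card_fiberwise (f := (· ∩ Icc 1 p)) (t := (Icc 1 p).powerset)
    fun B _ ↦ mem_powerset.2 inter_subset_right]
  calc _ ≤ ∑ S ∈ (Icc 1 p).powerset, #(walkFamily r 0 (e - #S) (m - p) (b - #S)) :=
        sum_le_sum fun S _ ↦ card_walkFamily_fiber_le S
    _ = _ := by
      rw [sum_powerset_apply_card (fun σ ↦ #(walkFamily r 0 (e - σ) (m - p) (b - σ))),
        Nat.card_Icc]
      simp

theorem card_walkFamily_zero_le (hr : 2 ≤ r) (h : 2 * b ≤ m + r * d) :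
    #(walkFamily r 0 d m b) ≤ if r * d ≤ b then m.choose (b - r * d) else 0 := by
  induction m using Nat.strong_induction_on generalizing b d with
  | _ m ih =>
  split_ifs with hrd
  swap
  · exact (card_eq_zero.2 (eq_empty_of_forall_notMem fun B hB ↦
      hrd (le_card_of_mem_walkFamily_zero (by omega) hB))).le
  rcases d with _ | d
  · calc #(walkFamily r 0 0 m b) ≤ #(powersetCard b (Icc 1 m)) :=
          card_le_card fun B hB ↦ (mem_walkFamily.1 hB).1
      _ = _ := by simp
  have hrd1 : r * (d + 1) = r * d + r := by ring
  have hm : r ≤ m := by omega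
  set c := b - r * (d + 1)
  calc #(walkFamily r 0 (d + 1) m b)
      ≤ ∑ σ ∈ range (r + 1), r.choose σ * #(walkFamily r 0 (d + r - σ) (m - r) (b - σ)) := by
        rw [walkFamily_zero_add_one (by omega)]
        exact card_walkFamily_le_sum r r (d + r) m b
    _ ≤ ∑ σ ∈ range (r + 1), r.choose σ *
          (fun u ↦ if u ≤ c then (m - r).choose (c - u) else 0) (r - σ) := by
        gcongr with σ hσ
        have hσ : σ ≤ r := Nat.lt_succ_iff.1 (mem_range.1 hσ)
        have h2u : 2 * (r - σ) ≤ r * (r - σ) := Nat.mul_le_mul_right _ hr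
        have hrd' : r * (d + r - σ) = r * d + r * (r - σ) := by
          rw [← mul_add]
          congr 1
          omega
        refine (ih (m - r) (by omega) (by omega)).trans ?_
        dsimp only
        split_ifs with h₁ h₂
        · exact Nat.choose_le_choose_of_le_of_two_mul_le (by omega) (by omega)
        · omega
        all_goals exact Nat.zero_le _
    _ = (r + (m - r)).choose c :=
        (sum_range_choose_mul_reflect r _).trans (sum_range_choose_mul_ite_choose _ _ _)
    _ = m.choose c := by rw [Nat.add_sub_cancel' hm]

theorem card_walkFamily_le {n k t : ℕ} (hr : 2 ≤ r) (hn : 2 * k ≤ n + t) :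
    #(walkFamily r t t n k) ≤ ∑ i ∈ range (t + 1),
      t.choose i * (if t + (r - 1) * i ≤ k then (n - t).choose (k - t - (r - 1) * i) else 0) := by
  rcases lt_or_ge k t with hkt | htk
  · simp [walkFamily_eq_empty_of_lt hkt]
  refine (card_walkFamily_le_sum r t t n k).trans (le_of_le_of_eq ?_
    (sum_range_choose_mul_reflect t fun i ↦
      if t + (r - 1) * i ≤ k then (n - t).choose (k - t - (r - 1) * i) else 0))
  gcongr with σ hσ
  have hσ : σ ≤ t := Nat.lt_succ_iff.1 (mem_range.1 hσ)
  have h2 : 2 * (t - σ) ≤ r * (t - σ) := Nat.mul_le_mul_right _ hr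
  have hr' : r * (t - σ) = (r - 1) * (t - σ) + (t - σ) := by
    rw [← Nat.succ_mul, Nat.succ_eq_add_one, Nat.sub_add_cancel (by omega)]
  refine (card_walkFamily_zero_le hr (by omega)).trans (le_of_eq ?_)
  split_ifs <;> first | rfl | omega | (congr 1; omega)

end Counting

theorem rwise_intersecting_universal_bound_general
    (n k r t : ℕ) (hr : 3 ≤ r) (hn : 2 * k ≤ n + t)
    (𝓕 : Finset (Finset ℕ))
    (h𝓕 : 𝓕 ⊆ Finset.powersetCard k (Finset.Icc 1 n))
    (hint : RwiseIntersecting r t 𝓕) :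
    𝓕.card ≤ ∑ i ∈ Finset.range (t + 1),
      Nat.choose t i *
        (if t + (r - 1) * i ≤ k then Nat.choose (n - t) (k - t - (r - 1) * i) else 0) := by
  obtain ⟨𝓖, ⟨hcard, h𝓖, hint𝓖⟩, hsh⟩ := exists_shifted
    (fun 𝓖 ↦ #𝓖 = #𝓕 ∧ 𝓖 ⊆ powersetCard k (Icc 1 n) ∧ RwiseIntersecting r t 𝓖)
    (fun i j 𝓖 hi hij ⟨hc, hs, hI⟩ ↦ ⟨(card_compression _ _ _).trans hc,
      compression_subset_powersetCard hi hij hs, hI.compression hij.ne⟩) ⟨rfl, h𝓕, hint⟩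
  have hwalk : 𝓖 ⊆ walkFamily r t t n k := fun G hG ↦ mem_walkFamily.2 ⟨h𝓖 hG,
    hsh.exists_le_card_inter_Icc (by omega) hint𝓖 hG fun h0 ↦ by
      simpa using (mem_powersetCard.1 (h𝓖 hG)).1 h0⟩
  rw [← hcard]
  exact (card_le_card hwalk).trans (card_walkFamily_le (by omega) hn)

theorem rwise_intersecting_universal_bound
    (n k r t : ℕ) (hr : 3 ≤ r) (ht : 1 ≤ t) (hn : 2 * k ≤ n + t)
    (𝓕 : Finset (Finset ℕ))
    (h𝓕 : 𝓕 ⊆ Finset.powersetCard k (Finset.Icc 1 n))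
    (hint : RwiseIntersecting r t 𝓕) :
    𝓕.card ≤ ∑ i ∈ Finset.range (t + 1),
      Nat.choose t i *
        (if t + (r - 1) * i ≤ k then Nat.choose (n - t) (k - t - (r - 1) * i) else 0) :=
  rwise_intersecting_universal_bound_general n k r t hr hn 𝓕 h𝓕 hint
end

section
/- Let t ≥ 2 and k ≥ t + 3 be integers and let n be an integer with n ≥ ((√(4t+9) − 1)/2)·k. Then |𝓐₁(n,k,3,t)| < C(n−t, k−t), where 𝓐₁(n,k,3,t) is the family of all k-element subsets A of [n] with |A ∩ [t+3]| ≥ t + 2. -/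
/-!
Write `T = [t+3]`. A set of `𝓐₁(n,k,3,t)` either contains `T` or misses exactly one point of
it, so `|𝓐₁| = C(m, e) + (t+3) C(m, e+1)` with `m = n-t-3`, `e = k-t-3`, while
`C(n-t, k-t) = C(m, e) + 3 C(m, e+1) + 3 C(m, e+2) + C(m, e+3)`. It remains to show
`t C(m, e+1) < 3 C(m, e+2) + C(m, e+3)`; dividing by `C(m, e+1)` turns this into the quadratic
inequality `t s (s-1) < y (y-1) + 3 y s` in `s = k-t` and `y = n-k-1`. Writing `t = a(a+3)`, the
hypothesis on `n` says exactly `y ≥ a k - 1`, and at `y = a k - 1` the leading terms in `s` cancel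
while the remaining ones are positive.
-/

/-- The Frankl family `𝓐₁(n,k,r,t)`: all `k`-element subsets `A` of `[n]` with
`|A ∩ [t+r]| ≥ t + r - 1`. -/
def franklFamilyOne (n k r t : ℕ) : Finset (Finset ℕ) :=
  (Finset.powersetCard k (Finset.Icc 1 n)).filter
    (fun A => t + r - 1 ≤ (A ∩ Finset.Icc 1 (t + r)).card)

open Finset

section SetFamily

variable {α : Type*} [DecidableEq α]

lemma card_powersetCard_filter_inter_eq {G T S : Finset α} {k : ℕ} (hTG : T ⊆ G)
    (hST : S ⊆ T) (hSk : #S ≤ k) :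
    #{A ∈ G.powersetCard k | A ∩ T = S} = (#G - #T).choose (k - #S) := by
  rw [← card_sdiff_of_subset hTG, ← card_powersetCard]
  refine card_nbij' (· \ T) (· ∪ S) ?_ ?_ ?_ ?_
  · intro A hA
    simp only [coe_filter, mem_powersetCard, Set.mem_ofPred_eq, mem_coe] at hA ⊢
    obtain ⟨⟨hAG, rfl⟩, rfl⟩ := hA
    exact ⟨sdiff_subset_sdiff hAG subset_rfl, by rw [← card_sdiff_add_card_inter A T]; omega⟩
  · intro B hB
    simp only [coe_filter, mem_powersetCard, Set.mem_ofPred_eq, mem_coe] at hB ⊢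
    obtain ⟨hBG, hB⟩ := hB
    have hBT : Disjoint B T := (subset_sdiff.1 hBG).2
    refine ⟨⟨union_subset (hBG.trans sdiff_subset) (hST.trans hTG), ?_⟩, ?_⟩
    · rw [card_union_of_disjoint (hBT.mono_right hST)]; omega
    · rw [union_inter_distrib_right, disjoint_iff_inter_eq_empty.1 hBT, empty_union,
        inter_eq_left.2 hST]
  · intro A hA
    simp only [coe_filter, Set.mem_ofPred_eq] at hA
    exact hA.2 ▸ sdiff_union_inter A T
  · intro B hB
    simp only [mem_coe, mem_powersetCard, subset_sdiff] at hB
    simp only [union_sdiff_distrib, sdiff_eq_empty_iff_subset.2 hST, union_empty,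
      hB.1.2.sdiff_eq_left]

lemma eq_or_exists_eq_erase_of_card_sub_one_le {S T : Finset α} (hST : S ⊆ T)
    (hcard : #T - 1 ≤ #S) : S = T ∨ ∃ i ∈ T, S = T.erase i := by
  by_cases hTS : T ⊆ S
  · exact Or.inl (hST.antisymm hTS)
  · obtain ⟨i, hiT, hiS⟩ := not_subset.1 hTS
    refine Or.inr ⟨i, hiT, eq_of_subset_of_card_le (fun j hj => ?_) ?_⟩
    · exact mem_erase.2 ⟨fun h => hiS (h ▸ hj), hST hj⟩
    · rwa [card_erase_of_mem hiT]

lemma card_powersetCard_filter_card_sub_one_le_card_inter {G T : Finset α} {k : ℕ}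
    (hTG : T ⊆ G) (hTk : #T ≤ k) :
    #{A ∈ G.powersetCard k | #T - 1 ≤ #(A ∩ T)} =
      (#G - #T).choose (k - #T) + #T * (#G - #T).choose (k - #T + 1) := by
  have hmaps : ∀ A ∈ ({A ∈ G.powersetCard k | #T - 1 ≤ #(A ∩ T)} : Finset (Finset α)),
      A ∩ T ∈ insert T (T.image T.erase) := by
    intro A hA
    rw [mem_filter] at hA
    rcases eq_or_exists_eq_erase_of_card_sub_one_le inter_subset_right hA.2 with h | ⟨i, hi, h⟩
    · simp [h]
    · exact mem_insert_of_mem (mem_image.2 ⟨i, hi, h.symm⟩)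
  have hfiber : ∀ S ⊆ T, #T - 1 ≤ #S → #S ≤ k →
      #{A ∈ {A ∈ G.powersetCard k | #T - 1 ≤ #(A ∩ T)} | A ∩ T = S} =
        (#G - #T).choose (k - #S) := by
    intro S hST hTS hSk
    rw [filter_filter, ← card_powersetCard_filter_inter_eq hTG hST hSk]
    congr 1
    exact filter_congr fun A _ => ⟨And.right, fun h => ⟨h ▸ hTS, h⟩⟩
  have hT : T ∉ T.image T.erase := by
    simp only [mem_image, not_exists, not_and]
    exact fun i hi h => notMem_erase i T (h.symm ▸ hi)
  rw [card_eq_sum_card_fiberwise fun A hA => hmaps A hA, sum_insert hT, sum_image T.erase_injOn,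
    hfiber T subset_rfl (Nat.sub_le _ _) hTk]
  congr 1
  rw [sum_congr rfl fun i hi => ?_, sum_const, smul_eq_mul]
  have hcard := card_erase_of_mem hi
  have hT₀ := card_pos.2 ⟨i, hi⟩
  rw [hfiber _ (erase_subset i T) hcard.ge (by omega), hcard,
    show k - (#T - 1) = k - #T + 1 by omega]

end SetFamily

lemma card_franklFamilyOne {n k r t : ℕ} (hn : t + r ≤ n) (hk : t + r ≤ k) :
    #(franklFamilyOne n k r t) =
      (n - (t + r)).choose (k - (t + r)) + (t + r) * (n - (t + r)).choose (k - (t + r) + 1) := by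
  have := card_powersetCard_filter_card_sub_one_le_card_inter (k := k)
    (Icc_subset_Icc_right hn : Icc 1 (t + r) ⊆ Icc 1 n) (by simpa using hk)
  simpa [franklFamilyOne] using this

lemma Nat.choose_add_three_add_three (m e : ℕ) :
    (m + 3).choose (e + 3) =
      m.choose e + 3 * m.choose (e + 1) + 3 * m.choose (e + 2) + m.choose (e + 3) := by
  simp only [Nat.choose_succ_succ]
  ring

lemma Nat.mul_choose_lt_of_mul_lt {c p q : ℕ}
    (h : c * (p + 1) * (p + 2) < q * (q - 1) + 3 * q * (p + 2)) :
    c * (p + q).choose p < 3 * (p + q).choose (p + 1) + (p + q).choose (p + 2) := by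
  have h₁ := Nat.choose_succ_right_eq (p + q) p
  have h₂ := Nat.choose_succ_right_eq (p + q) (p + 1)
  rw [show p + q - p = q by omega] at h₁
  rw [show p + q - (p + 1) = q - 1 by omega] at h₂
  have hpos : 0 < (p + q).choose p := Nat.choose_pos (by omega)
  refine Nat.lt_of_mul_lt_mul_left (a := (p + 1) * (p + 2)) ?_
  calc (p + 1) * (p + 2) * (c * (p + q).choose p)
      = c * (p + 1) * (p + 2) * (p + q).choose p := by ring
    _ < (q * (q - 1) + 3 * q * (p + 2)) * (p + q).choose p := Nat.mul_lt_mul_of_pos_right h hpos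
    _ = (p + 1) * (p + 2) * (3 * (p + q).choose (p + 1) + (p + q).choose (p + 2)) := by grind

lemma mul_mul_sub_one_lt {a s y : ℝ} (ha : 0 ≤ a) (hx : 1 ≤ a * (a * (a + 3))) (hs : 1 ≤ s)
    (hy : a * (s + a * (a + 3)) - 1 ≤ y) :
    a * (a + 3) * s * (s - 1) < y * (y - 1) + 3 * y * s := by
  set x := a * (a * (a + 3))
  set y₀ := a * (s + a * (a + 3)) - 1
  have hmono : y₀ * (y₀ - 1) + 3 * y₀ * s ≤ y * (y - 1) + 3 * y * s := by
    have : 0 ≤ y₀ := by nlinarith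
    nlinarith [mul_nonneg (sub_nonneg.2 hy) (by linarith : 0 ≤ y + y₀ - 1 + 3 * s)]
  have hgap : y₀ * (y₀ - 1) + 3 * y₀ * s - a * (a + 3) * s * (s - 1)
      = (s - 1) * (2 * a * x + 3 * x + a ^ 2 - 3) + ((a + x) ^ 2 - 1) := by ring
  have hlin : 0 ≤ (s - 1) * (2 * a * x + 3 * x + a ^ 2 - 3) :=
    mul_nonneg (by linarith) (by nlinarith)
  nlinarith

lemma mul_lt_of_sqrt_threshold {t p q : ℕ} (ht : 2 ≤ t)
    (h : (Real.sqrt (4 * t + 9) - 1) / 2 * ((t + p + 2 : ℕ) : ℝ) ≤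
      ((t + p + 2 + 1 + q : ℕ) : ℝ)) :
    t * (p + 1) * (p + 2) < q * (q - 1) + 3 * q * (p + 2) := by
  set a : ℝ := (Real.sqrt (4 * t + 9) - 3) / 2 with ha_def
  have ht' : (2 : ℝ) ≤ t := by exact_mod_cast ht
  have hsq := Real.sq_sqrt (by positivity : (0 : ℝ) ≤ 4 * t + 9)
  have hat : a * (a + 3) = t := by rw [ha_def]; linear_combination hsq / 4
  have ha_half : 1 / 2 ≤ a := by
    have : 4 ≤ Real.sqrt (4 * t + 9) := Real.le_sqrt_of_sq_le (by linarith)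
    linarith
  have hq : a * ((p + 2 : ℝ) + a * (a + 3)) - 1 ≤ q := by
    push_cast at h; rw [hat]; linear_combination h
  have hq1 : 1 ≤ q := by
    have : (1 : ℝ) ≤ q := by nlinarith
    exact_mod_cast this
  have hreal := mul_mul_sub_one_lt (by linarith) (by rw [hat]; nlinarith) (by linarith) hq
  rw [hat] at hreal
  rw [← Nat.cast_lt (α := ℝ)]
  push_cast [Nat.cast_sub hq1]
  linear_combination hreal

theorem franklFamilyOne_card_lt
    (t k n : ℕ) (ht : 2 ≤ t) (hk : t + 3 ≤ k)
    (hn : ((Real.sqrt (4 * (t : ℝ) + 9) - 1) / 2) * (k : ℝ) ≤ (n : ℝ)) :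
    (franklFamilyOne n k 3 t).card < Nat.choose (n - t) (k - t) := by
  have hkn : k + 1 ≤ n := by
    have ht' : (2 : ℝ) ≤ t := by exact_mod_cast ht
    have : (4 : ℝ) ≤ Real.sqrt (4 * t + 9) := Real.le_sqrt_of_sq_le (by linarith)
    have : (t + 3 : ℝ) ≤ k := by exact_mod_cast hk
    have : (k + 1 : ℝ) ≤ n := by nlinarith
    exact_mod_cast this
  obtain ⟨e, rfl⟩ := Nat.exists_eq_add_of_le hk
  obtain ⟨q, rfl⟩ := Nat.exists_eq_add_of_le hkn
  have hC : t * (e + 1 + q).choose (e + 1) <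
      3 * (e + 1 + q).choose (e + 2) + (e + 1 + q).choose (e + 3) :=
    Nat.mul_choose_lt_of_mul_lt (mul_lt_of_sqrt_threshold ht (by convert hn using 3 <;> ring))
  rw [card_franklFamilyOne (by omega) (by omega),
    show t + 3 + e + 1 + q - (t + 3) = e + 1 + q by omega, show t + 3 + e - (t + 3) = e by omega,
    show t + 3 + e + 1 + q - t = e + 1 + q + 3 by omega, show t + 3 + e - t = e + 3 by omega,
    Nat.choose_add_three_add_three, add_mul]
  linarith
end
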